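/- Let C be a symmetrizable generalized Cartan matrix of Dynkin type (i.e., the quadratic form q_C is positive definite) and let c = c⁺ = sₙ⋯s₁ be the Coxeter transformation on ℤⁿ. Then for every nonzero vector x ∈ ℕⁿ with x > 0 there exists s ≥ 0 such that cˢ(x) > 0 but c^{s+1}(x) is not ≥ 0 componentwise, and similarly there exists t ≥ 0 such that c^{−t}(x) > 0 but c^{−t−1}(x) is not ≥ 0. -/

import Mathlib

/-- The quadratic form associated to a symmetrizable generalized Cartan matrix. -/
def cartanQuadForm (n : ℕ) (C : Matrix (Fin n) (Fin n) ℤ) (c : Fin n → ℤ)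
    (x : Fin n → ℤ) : ℤ :=
  (∑ i, c i * x i ^ 2) -
    ∑ p ∈ Finset.univ.filter (fun p : Fin n × Fin n => p.1 < p.2),
      c p.1 * |C p.1 p.2| * x p.1 * x p.2

/-- The simple reflection `sᵢ : ℤⁿ → ℤⁿ`. -/
def simpleRefl (n : ℕ) (C : Matrix (Fin n) (Fin n) ℤ) (i : Fin n) (x : Fin n → ℤ) :
    Fin n → ℤ :=
  fun l => x l - (if l = i then ∑ j, C i j * x j else 0)

/-- The Coxeter transformation `c⁺ = sₙ⋯s₁` (`s₁` applied first). -/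
def coxeterPlus (n : ℕ) (C : Matrix (Fin n) (Fin n) ℤ) (x : Fin n → ℤ) : Fin n → ℤ :=
  (List.finRange n).foldl (fun y i => simpleRefl n C i y) x

/-- The inverse Coxeter transformation `c⁻ = s₁⋯sₙ` (`sₙ` applied first). -/
def coxeterMinus (n : ℕ) (C : Matrix (Fin n) (Fin n) ℤ) (x : Fin n → ℤ) : Fin n → ℤ :=
  (List.finRange n).foldr (fun i y => simpleRefl n C i y) x

/-!
The symmetric form `B(x, y) = ∑ cᵢ Cᵢⱼ xᵢ yⱼ` satisfies `B(x, x) = 2 q_C(x)`, so it is positive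
definite on `ℤⁿ`, and every simple reflection, hence `c` and `c⁻¹`, preserves it. Its level sets
are finite: by Cauchy–Schwarz the coordinates of `diag(c) C y` are bounded on a level set, and
`y ↦ diag(c) C y` is injective. So every orbit of `c` is periodic. If the orbit of `x ≥ 0`,
`x ≠ 0` stayed in the positive cone, the sum over one period would be a nonzero fixed vector
of `c`. But `c y = y` forces `C y = 0`, because `sᵢ` changes only the `i`-th coordinate and the
`sᵢ` are applied in turn, and then `B(y, y) = 0`, i.e. `y = 0`.
-/

open Matrix Finset Function

theorem Finset.sum_sum_eq_sum_add_two_mul_sum_lt {ι R : Type*} [Fintype ι] [LinearOrder ι]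
    [CommSemiring R] (f : ι → ι → R) (hf : ∀ i j, f i j = f j i) :
    ∑ i, ∑ j, f i j = ∑ i, f i i + 2 * ∑ p : ι × ι with p.1 < p.2, f p.1 p.2 := by
  have hsplit (i j : ι) : f i j = (if i = j then f i j else 0) +
      (if i < j then f i j else 0) + (if j < i then f j i else 0) := by
    rcases lt_trichotomy i j with h | rfl | h
    · simp [h, h.ne, h.not_gt]
    · simp
    · simp [h, h.ne', h.not_gt, hf i j]
  have hlt : ∑ i, ∑ j, (if i < j then f i j else 0) =
      ∑ p : ι × ι with p.1 < p.2, f p.1 p.2 := by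
    rw [Finset.sum_filter, ← Finset.univ_product_univ, Finset.sum_product]
  calc ∑ i, ∑ j, f i j
      = ∑ i, ∑ j, ((if i = j then f i j else 0) + (if i < j then f i j else 0) +
          (if j < i then f j i else 0)) := by simp_rw [← hsplit]
    _ = _ := by
      simp only [Finset.sum_add_distrib, Finset.sum_ite_eq, Finset.mem_univ, if_true]
      rw [Finset.sum_comm (f := fun i j => if j < i then f j i else 0), hlt, two_mul, add_assoc]

section CartanForm

variable {n : ℕ} {C : Matrix (Fin n) (Fin n) ℤ} {c : Fin n → ℤ}

variable (C c) in
def cartanBilin : LinearMap.BilinForm ℤ (Fin n → ℤ) := Matrix.toBilin' (diagonal c * C)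

theorem cartanBilin_apply (x y : Fin n → ℤ) :
    cartanBilin C c x y = ∑ i, ∑ j, c i * C i j * x i * y j := by
  simp only [cartanBilin, toBilin'_apply, diagonal_mul]
  exact Finset.sum_congr rfl fun i _ => Finset.sum_congr rfl fun j _ => by ring

theorem cartanBilin_apply_eq_dotProduct (x y : Fin n → ℤ) :
    cartanBilin C c x y = x ⬝ᵥ diagonal c *ᵥ (C *ᵥ y) := by
  rw [cartanBilin, toBilin'_apply', mulVec_mulVec]

theorem cartanBilin_single_left (i : Fin n) (y : Fin n → ℤ) :
    cartanBilin C c (Pi.single i 1) y = c i * (C *ᵥ y) i := by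
  rw [cartanBilin_apply_eq_dotProduct, single_one_dotProduct, mulVec_diagonal]

theorem cartanBilin_isSymm (hsym : ∀ i j, c i * C i j = c j * C j i) :
    LinearMap.IsSymm (cartanBilin C c) := by
  refine ⟨fun x y => ?_⟩
  rw [RingHom.id_apply, cartanBilin_apply, cartanBilin_apply, Finset.sum_comm]
  exact Finset.sum_congr rfl fun i _ => Finset.sum_congr rfl fun j _ => by
    rw [hsym]; ring

theorem cartanBilin_self (hdiag : ∀ i, C i i = 2) (hoff : ∀ i j, i ≠ j → C i j ≤ 0)
    (hsym : ∀ i j, c i * C i j = c j * C j i) (x : Fin n → ℤ) :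
    cartanBilin C c x x = 2 * cartanQuadForm n C c x := by
  have hdiag' (i : Fin n) : c i * C i i * x i * x i = 2 * (c i * x i ^ 2) := by
    rw [hdiag]; ring
  have hoff' (p : Fin n × Fin n) (hp : p ∈ ({p | p.1 < p.2} : Finset (Fin n × Fin n))) :
      c p.1 * C p.1 p.2 * x p.1 * x p.2 = -(c p.1 * |C p.1 p.2| * x p.1 * x p.2) := by
    rw [abs_of_nonpos (hoff _ _ (Finset.mem_filter.mp hp).2.ne)]; ring
  rw [cartanBilin_apply, Finset.sum_sum_eq_sum_add_two_mul_sum_lt _ fun i j => by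
      rw [hsym i j]; ring,
    Finset.sum_congr rfl fun i _ => hdiag' i, Finset.sum_congr rfl hoff',
    ← Finset.mul_sum, Finset.sum_neg_distrib, cartanQuadForm]
  ring

theorem cartanBilin_pos (hdiag : ∀ i, C i i = 2) (hoff : ∀ i j, i ≠ j → C i j ≤ 0)
    (hsym : ∀ i j, c i * C i j = c j * C j i)
    (hposdef : ∀ x : Fin n → ℤ, x ≠ 0 → 0 < cartanQuadForm n C c x)
    {x : Fin n → ℤ} (hx : x ≠ 0) : 0 < cartanBilin C c x x := by
  rw [cartanBilin_self hdiag hoff hsym]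
  exact mul_pos two_pos (hposdef x hx)

theorem cartanBilin_self_nonneg (hpos : ∀ x, x ≠ 0 → 0 < cartanBilin C c x x)
    (x : Fin n → ℤ) : 0 ≤ cartanBilin C c x x := by
  rcases eq_or_ne x 0 with rfl | hx
  · simp
  · exact (hpos x hx).le

theorem eq_zero_of_mulVec_eq_zero (hpos : ∀ x, x ≠ 0 → 0 < cartanBilin C c x x)
    {y : Fin n → ℤ} (hy : C *ᵥ y = 0) : y = 0 := by
  by_contra hy0
  simpa [cartanBilin_apply_eq_dotProduct, hy] using hpos y hy0

theorem injective_diagonal_mulVec_mulVec (hpos : ∀ x, x ≠ 0 → 0 < cartanBilin C c x x) :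
    Injective fun y => diagonal c *ᵥ (C *ᵥ y) := by
  intro y z (h : diagonal c *ᵥ (C *ᵥ y) = diagonal c *ᵥ (C *ᵥ z))
  by_contra hne
  have := hpos (y - z) (sub_ne_zero.mpr hne)
  rw [cartanBilin_apply_eq_dotProduct, mulVec_sub, mulVec_sub, h, sub_self,
    dotProduct_zero] at this
  exact this.false

theorem finite_setOf_cartanBilin_self_eq (hpos : ∀ x, x ≠ 0 → 0 < cartanBilin C c x x)
    (hsym : ∀ i j, c i * C i j = c j * C j i) (k : ℤ) :
    {y | cartanBilin C c y y = k}.Finite := by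
  let bound : Fin n → ℤ := fun l => cartanBilin C c (Pi.single l 1) (Pi.single l 1) * k
  refine ((Set.finite_Icc (-bound) bound).preimage
    (injective_diagonal_mulVec_mulVec hpos).injOn).subset fun y (hy : _ = k) => ?_
  have hcs (l : Fin n) : |(diagonal c *ᵥ (C *ᵥ y)) l| ≤ bound l :=
    calc |(diagonal c *ᵥ (C *ᵥ y)) l|
        ≤ (diagonal c *ᵥ (C *ᵥ y)) l ^ 2 := by
          rw [Int.abs_eq_natAbs]; exact Int.natAbs_le_self_sq _
      _ = cartanBilin C c (Pi.single l 1) y ^ 2 := by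
          rw [mulVec_diagonal, cartanBilin_single_left]
      _ ≤ cartanBilin C c (Pi.single l 1) (Pi.single l 1) * k := by
          rw [← hy]
          exact (cartanBilin C c).apply_sq_le_of_symm (cartanBilin_self_nonneg hpos)
            (cartanBilin_isSymm hsym) _ _
  exact ⟨fun l => neg_le_of_abs_le (hcs l), fun l => le_of_abs_le (hcs l)⟩

end CartanForm

section Reflections

variable {n : ℕ} {C : Matrix (Fin n) (Fin n) ℤ} {c : Fin n → ℤ}

theorem simpleRefl_eq_sub_smul (i : Fin n) (x : Fin n → ℤ) :
    simpleRefl n C i x = x - (C *ᵥ x) i • Pi.single i 1 := by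
  ext l
  by_cases h : l = i <;> simp [simpleRefl, h, mulVec, dotProduct]

theorem simpleRefl_apply_of_ne {i l : Fin n} (h : l ≠ i) (x : Fin n → ℤ) :
    simpleRefl n C i x l = x l := by
  simp [simpleRefl, h]

theorem simpleRefl_add (i : Fin n) (x y : Fin n → ℤ) :
    simpleRefl n C i (x + y) = simpleRefl n C i x + simpleRefl n C i y := by
  simp only [simpleRefl_eq_sub_smul, mulVec_add, Pi.add_apply, add_smul]
  abel

theorem simpleRefl_involutive (hdiag : ∀ i, C i i = 2) (i : Fin n) :
    Involutive (simpleRefl n C i) := by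
  intro x
  simp only [simpleRefl_eq_sub_smul, mulVec_sub, mulVec_smul, mulVec_single_one, Pi.sub_apply,
    Pi.smul_apply, col_apply, hdiag, smul_eq_mul]
  module

theorem cartanBilin_simpleRefl (hdiag : ∀ i, C i i = 2)
    (hsym : ∀ i j, c i * C i j = c j * C j i) (i : Fin n) (x : Fin n → ℤ) :
    cartanBilin C c (simpleRefl n C i x) (simpleRefl n C i x) = cartanBilin C c x x := by
  simp only [simpleRefl_eq_sub_smul, map_sub, map_smul, LinearMap.sub_apply,
    LinearMap.smul_apply, smul_eq_mul]
  rw [← (cartanBilin_isSymm hsym).eq (Pi.single i 1) x, RingHom.id_apply,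
    cartanBilin_single_left, cartanBilin_single_left, mulVec_single_one, col_apply, hdiag]
  ring

end Reflections

section Coxeter

variable {n : ℕ} {C : Matrix (Fin n) (Fin n) ℤ} {c : Fin n → ℤ}

theorem coxeterPlus_add (x y : Fin n → ℤ) :
    coxeterPlus n C (x + y) = coxeterPlus n C x + coxeterPlus n C y := by
  unfold coxeterPlus
  induction List.finRange n generalizing x y with
  | nil => rfl
  | cons i L ih => simp only [List.foldl_cons, simpleRefl_add, ih]

theorem coxeterMinus_coxeterPlus (hdiag : ∀ i, C i i = 2) (x : Fin n → ℤ) :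
    coxeterMinus n C (coxeterPlus n C x) = x := by
  unfold coxeterPlus coxeterMinus
  induction List.finRange n generalizing x with
  | nil => rfl
  | cons i L ih => rw [List.foldl_cons, List.foldr_cons, ih, simpleRefl_involutive hdiag]

theorem coxeterPlus_coxeterMinus (hdiag : ∀ i, C i i = 2) (x : Fin n → ℤ) :
    coxeterPlus n C (coxeterMinus n C x) = x := by
  unfold coxeterPlus coxeterMinus
  induction List.finRange n generalizing x with
  | nil => rfl
  | cons i L ih => rw [List.foldl_cons, List.foldr_cons, simpleRefl_involutive hdiag, ih]

variable (C) in
def coxeterEquiv (hdiag : ∀ i, C i i = 2) : (Fin n → ℤ) ≃+ (Fin n → ℤ) where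
  toFun := coxeterPlus n C
  invFun := coxeterMinus n C
  left_inv := coxeterMinus_coxeterPlus hdiag
  right_inv := coxeterPlus_coxeterMinus hdiag
  map_add' := coxeterPlus_add

theorem cartanBilin_coxeterPlus (hdiag : ∀ i, C i i = 2)
    (hsym : ∀ i j, c i * C i j = c j * C j i) (x : Fin n → ℤ) :
    cartanBilin C c (coxeterPlus n C x) (coxeterPlus n C x) = cartanBilin C c x x := by
  unfold coxeterPlus
  induction List.finRange n generalizing x with
  | nil => rfl
  | cons i L ih => rw [List.foldl_cons, ih, cartanBilin_simpleRefl hdiag hsym]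

theorem cartanBilin_coxeterMinus (hdiag : ∀ i, C i i = 2)
    (hsym : ∀ i j, c i * C i j = c j * C j i) (x : Fin n → ℤ) :
    cartanBilin C c (coxeterMinus n C x) (coxeterMinus n C x) = cartanBilin C c x x := by
  rw [← cartanBilin_coxeterPlus hdiag hsym, coxeterPlus_coxeterMinus hdiag]

theorem foldl_simpleRefl_apply_of_notMem {L : List (Fin n)} {l : Fin n} (hl : l ∉ L)
    (x : Fin n → ℤ) : L.foldl (fun y i => simpleRefl n C i y) x l = x l := by
  induction L generalizing x with
  | nil => rfl
  | cons i L ih =>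
    rw [List.mem_cons, not_or] at hl
    rw [List.foldl_cons, ih hl.2, simpleRefl_apply_of_ne hl.1]

theorem mulVec_apply_eq_zero_of_foldl_simpleRefl_eq_self {L : List (Fin n)} (hL : L.Nodup)
    {x : Fin n → ℤ} (hx : L.foldl (fun y i => simpleRefl n C i y) x = x) :
    ∀ i ∈ L, (C *ᵥ x) i = 0 := by
  induction L with
  | nil => simp
  | cons i L ih =>
    rw [List.nodup_cons] at hL
    rw [List.foldl_cons] at hx
    have hi : (C *ᵥ x) i = 0 := by
      have := congrFun hx i
      rw [foldl_simpleRefl_apply_of_notMem hL.1, simpleRefl_eq_sub_smul] at this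
      simpa using this
    rw [simpleRefl_eq_sub_smul, hi, zero_smul, sub_zero] at hx
    exact List.forall_mem_cons.mpr ⟨hi, ih hL.2 hx⟩

theorem eq_zero_of_coxeterPlus_eq_self (hpos : ∀ x, x ≠ 0 → 0 < cartanBilin C c x x)
    {x : Fin n → ℤ} (hx : coxeterPlus n C x = x) : x = 0 :=
  eq_zero_of_mulVec_eq_zero hpos <| funext fun i =>
    mulVec_apply_eq_zero_of_foldl_simpleRefl_eq_self (List.nodup_finRange n) hx i
      (List.mem_finRange i)

end Coxeter

section OrbitLeavesCone

theorem Function.Injective.mem_periodicPts_of_mapsTo {α : Type*} {f : α → α} (hf : Injective f)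
    {t : Set α} (ht : t.Finite) (hft : Set.MapsTo f t t) {x : α} (hx : x ∈ t) :
    x ∈ periodicPts f := by
  obtain ⟨a, b, hab, h⟩ := ht.exists_lt_map_eq_of_forall_mem fun s => hft.iterate s hx
  exact mk_mem_periodicPts (Nat.sub_pos_of_lt hab) (iterate_cancel hf h.symm)

theorem Function.IsPeriodicPt.isFixedPt_sum_iterate {M F : Type*} [AddCancelCommMonoid M]
    [FunLike F M M] [AddMonoidHomClass F M M] (f : F) {p : ℕ} {x : M} (h : IsPeriodicPt f p x) :
    IsFixedPt f (∑ s ∈ range p, f^[s] x) := by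
  have hshift := Finset.sum_range_succ' (fun s => f^[s] x) p
  rw [Finset.sum_range_succ, h.eq, iterate_zero_apply] at hshift
  simp_rw [iterate_succ_apply'] at hshift
  rw [IsFixedPt, map_sum]
  exact (add_right_cancel hshift).symm

theorem AddEquiv.exists_iterate_nonneg_not_nonneg_succ {M : Type*} [AddCommGroup M]
    [PartialOrder M] [IsOrderedAddMonoid M] (f : M ≃+ M) (hfix : ∀ y, f y = y → y = 0)
    {t : Set M} (ht : t.Finite) (hft : Set.MapsTo f t t) {x : M} (hxt : x ∈ t) (hx : 0 ≤ x)
    (hx0 : x ≠ 0) : ∃ s, 0 ≤ f^[s] x ∧ f^[s] x ≠ 0 ∧ ¬ 0 ≤ f^[s + 1] x := by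
  obtain ⟨p, hp, hper⟩ := mem_periodicPts.mp (f.injective.mem_periodicPts_of_mapsTo ht hft hxt)
  have hne (s : ℕ) : f^[s] x ≠ 0 :=
    ((f.injective.iterate s).ne hx0).trans_eq (iterate_map_zero f s)
  by_contra! hstay
  have hnonneg (s : ℕ) : 0 ≤ f^[s] x := by
    induction s with
    | zero => exact hx
    | succ s ih => exact hstay s ih (hne s)
  have hsum : x ≤ ∑ s ∈ range p, f^[s] x :=
    Finset.single_le_sum (f := fun s => f^[s] x) (fun s _ => hnonneg s) (mem_range.mpr hp)
  rw [hfix _ (hper.isFixedPt_sum_iterate f)] at hsum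
  exact hx0 (le_antisymm hsum hx)

end OrbitLeavesCone

theorem coxeter_orbit_leaves_positive_cone_general (n : ℕ)
    (C : Matrix (Fin n) (Fin n) ℤ) (c : Fin n → ℤ)
    (hdiag : ∀ i, C i i = 2)
    (hoff : ∀ i j, i ≠ j → C i j ≤ 0)
    (hsym : ∀ i j, c i * C i j = c j * C j i)
    (hposdef : ∀ x : Fin n → ℤ, x ≠ 0 → 0 < cartanQuadForm n C c x)
    (x : Fin n → ℤ) (hx0 : x ≠ 0) (hxnn : ∀ l, 0 ≤ x l) :
    (∃ s : ℕ, (∀ l, 0 ≤ (coxeterPlus n C)^[s] x l) ∧ (coxeterPlus n C)^[s] x ≠ 0 ∧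
        ¬ (∀ l, 0 ≤ (coxeterPlus n C)^[s + 1] x l)) ∧
    (∃ t : ℕ, (∀ l, 0 ≤ (coxeterMinus n C)^[t] x l) ∧ (coxeterMinus n C)^[t] x ≠ 0 ∧
        ¬ (∀ l, 0 ≤ (coxeterMinus n C)^[t + 1] x l)) := by
  have hpos (y : Fin n → ℤ) (hy : y ≠ 0) := cartanBilin_pos hdiag hoff hsym hposdef hy
  let e := coxeterEquiv C hdiag
  have hfix (y : Fin n → ℤ) (hy : e y = y) : y = 0 := eq_zero_of_coxeterPlus_eq_self hpos hy
  have hfix_symm (y : Fin n → ℤ) (hy : e.symm y = y) : y = 0 :=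
    hfix y (e.symm_apply_eq.mp hy).symm
  let level := {y | cartanBilin C c y y = cartanBilin C c x x}
  have hlevel : level.Finite := finite_setOf_cartanBilin_self_eq hpos hsym _
  have he : Set.MapsTo e level level := fun y hy =>
    (cartanBilin_coxeterPlus hdiag hsym y).trans hy
  have he_symm : Set.MapsTo e.symm level level := fun y hy =>
    (cartanBilin_coxeterMinus hdiag hsym y).trans hy
  exact ⟨e.exists_iterate_nonneg_not_nonneg_succ hfix hlevel he rfl hxnn hx0,
    e.symm.exists_iterate_nonneg_not_nonneg_succ hfix_symm hlevel he_symm rfl hxnn hx0⟩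

/-- Let `C` be a symmetrizable generalized Cartan matrix of Dynkin type (`q_C` positive
definite) with Coxeter transformation `c = sₙ⋯s₁`.  Then for every nonzero `x ∈ ℕⁿ` there is
`s ≥ 0` with `cˢ(x) > 0` but `c^{s+1}(x) ≱ 0` componentwise, and similarly there is `t ≥ 0`
with `c^{−t}(x) > 0` but `c^{−t−1}(x) ≱ 0`. -/
theorem coxeter_orbit_leaves_positive_cone (n : ℕ)
    (C : Matrix (Fin n) (Fin n) ℤ) (c : Fin n → ℤ)
    (hdiag : ∀ i, C i i = 2)
    (hoff : ∀ i j, i ≠ j → C i j ≤ 0)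
    (hzero : ∀ i j, C i j = 0 ↔ C j i = 0)
    (hc : ∀ i, 0 < c i)
    (hsym : ∀ i j, c i * C i j = c j * C j i)
    (hposdef : ∀ x : Fin n → ℤ, x ≠ 0 → 0 < cartanQuadForm n C c x)
    (x : Fin n → ℤ) (hx0 : x ≠ 0) (hxnn : ∀ l, 0 ≤ x l) :
    (∃ s : ℕ, (∀ l, 0 ≤ (coxeterPlus n C)^[s] x l) ∧ (coxeterPlus n C)^[s] x ≠ 0 ∧
        ¬ (∀ l, 0 ≤ (coxeterPlus n C)^[s + 1] x l)) ∧
    (∃ t : ℕ, (∀ l, 0 ≤ (coxeterMinus n C)^[t] x l) ∧ (coxeterMinus n C)^[t] x ≠ 0 ∧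
        ¬ (∀ l, 0 ≤ (coxeterMinus n C)^[t + 1] x l)) :=
  coxeter_orbit_leaves_positive_cone_general n C c hdiag hoff hsym hposdef x hx0 hxnn
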